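/- arXiv:1711.09996 — 4 statements merged into one kernel-verified Lean document; each statement's English description precedes it below -/
import Mathlib

section
/- Let X be a set and R a binary relation on X satisfying the Finiteness axiom. Let B be a ℤ-linear endomorphism of the free ℤ-module on X (the module of finitely supported functions X → ℤ) such that for all x, y ∈ X, if the coefficient of y in B(δ_x) is nonzero, where δ_x denotes the basis element supported at x, then R x y. Then B is locally nilpotent: for every element v of the module there exists n ∈ ℕ with Bⁿ v = 0. -/
/-!
Expanding `Bⁿ δ_x` in the basis, every `y` with nonzero coefficient is the end of an `R`-chain
of length `n` starting at `x`. By the Finiteness axiom the chains starting at `x` have bounded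
length, so `Bⁿ δ_x = 0` for large `n`; a general `v` is a finite combination of basis vectors.
-/

namespace Finsupp

variable {X Y S : Type*} [Semiring S]

theorem exists_apply_ne_zero_and_apply_single_ne_zero (f : (X →₀ S) →ₗ[S] (Y →₀ S))
    {v : X →₀ S} {y : Y} (h : f v y ≠ 0) : ∃ z, v z ≠ 0 ∧ f (single z 1) y ≠ 0 := by
  have hsum : f v = v.sum fun z c => c • f (single z 1) := by
    conv_lhs => rw [← v.sum_single]
    rw [map_finsuppSum]
    exact sum_congr fun z _ => by rw [← smul_single_one, map_smul]
  rw [hsum, sum_apply] at h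
  obtain ⟨z, -, hz⟩ := Finset.exists_ne_zero_of_sum_ne_zero h
  simp only [smul_apply, smul_eq_mul] at hz
  exact ⟨z, left_ne_zero_of_mul hz, right_ne_zero_of_mul hz⟩

theorem exists_pow_apply_eq_zero_of_forall_single (f : Module.End S (X →₀ S))
    (h : ∀ x, ∃ N, ∀ m ≥ N, (f ^ m) (single x 1) = 0) (v : X →₀ S) :
    ∃ n, (f ^ n) v = 0 := by
  choose N hN using h
  refine ⟨v.support.sup N, ext fun y => not_ne_iff.mp fun hy => ?_⟩
  obtain ⟨z, hz, hzy⟩ := exists_apply_ne_zero_and_apply_single_ne_zero _ hy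
  exact hzy (by rw [hN z _ (Finset.le_sup (mem_support_iff.mpr hz)), zero_apply])

end Finsupp

section Chains

open Finsupp

variable {X S : Type*} [Semiring S] (R : X → X → Prop) (B : Module.End S (X →₀ S))

theorem exists_isChain_of_pow_apply_single_ne_zero
    (hB : ∀ x y, B (single x 1) y ≠ 0 → R x y) (n : ℕ) {x y : X}
    (h : (B ^ n) (single x 1) y ≠ 0) : ∃ l : List X, l.length = n ∧ List.IsChain R (x :: l) := by
  induction n generalizing x with
  | zero => exact ⟨[], rfl, .singleton x⟩
  | succ n ih =>
    rw [pow_succ, Module.End.mul_apply] at h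
    obtain ⟨z, hxz, hzy⟩ := exists_apply_ne_zero_and_apply_single_ne_zero _ h
    obtain ⟨l, hl, hchain⟩ := ih hzy
    exact ⟨z :: l, by rw [List.length_cons, hl], hchain.cons_cons (hB x z hxz)⟩

theorem exists_pow_apply_single_eq_zero (x : X)
    (hfin : {l : List X | l ≠ [] ∧ List.IsChain R (x :: l)}.Finite)
    (hB : ∀ x y, B (single x 1) y ≠ 0 → R x y) :
    ∃ N, ∀ m ≥ N, (B ^ m) (single x 1) = 0 := by
  obtain ⟨L, hL⟩ := (hfin.image List.length).bddAbove
  refine ⟨L + 1, fun m hm => ext fun y => not_ne_iff.mp fun hy => ?_⟩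
  obtain ⟨l, rfl, hchain⟩ := exists_isChain_of_pow_apply_single_ne_zero R B hB m hy
  have hne : l ≠ [] := List.ne_nil_of_length_pos (by omega)
  have := hL ⟨l, ⟨hne, hchain⟩, rfl⟩
  omega

end Chains

/-- Let `R` be a binary relation on `X` satisfying the Finiteness axiom (for
every `x₀`, the set of `R`-chains starting at `x₀` is finite).  If `B` is a `ℤ`-linear
endomorphism of the free `ℤ`-module on `X` such that the coefficient of `y` in
`B (δ x)` is nonzero only when `R x y`, then `B` is locally nilpotent. -/
theorem stmt1 {X : Type*} (R : X → X → Prop)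
    (hfin : ∀ x₀ : X, {l : List X | l ≠ [] ∧ List.Chain R x₀ l}.Finite)
    (B : Module.End ℤ (X →₀ ℤ))
    (hB : ∀ x y : X, B (Finsupp.single x 1) y ≠ 0 → R x y) :
    ∀ v : X →₀ ℤ, ∃ n : ℕ, (B ^ n) v = 0 :=
  Finsupp.exists_pow_apply_eq_zero_of_forall_single B fun x =>
    exists_pow_apply_single_eq_zero R B x (hfin x) hB
end

section
/- Let (P, G, M, φ) be a coherent system of identifications. Then for all p, q ∈ P with G p q, one has φ_{p,q} ∘ φ_{q,p} = id on M p, i.e. φ_{q,p} : M p → M q and φ_{p,q} : M q → M p are mutually inverse bijections. -/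
/-- A coherent system of identifications: a set `P` of "choices of base points", a
symmetric relation `G` of "generic pairs", a family of sets `M p` (the cascade
homologies), and for each `G`-related ordered pair `(p, q)` a bijection
`φ h : M p → M q` (denoted `φ_{q,p}`), satisfying the cocycle condition on pairwise
`G`-related triples and richness: every finite subset of `P` admits a point `G`-related
to all its members. -/
structure CoherentSystem (P : Type*) (M : P → Type*) where
  G : P → P → Prop
  symm : ∀ {p q : P}, G p q → G q p
  φ : ∀ {p q : P}, G p q → M p → M q
  bij : ∀ {p q : P} (h : G p q), Function.Bijective (φ h)
  cocycle : ∀ {p q r : P} (hpq : G p q) (hqr : G q r) (hpr : G p r) (v : M p),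
      φ hqr (φ hpq v) = φ hpr v
  rich : ∀ s : Set P, s.Finite → ∃ r : P, ∀ p ∈ s, G p r

/-- In a coherent system of identifications, for `p q` with `G p q`,
`φ_{p,q} ∘ φ_{q,p} = id` on `M p`; i.e. `φ_{q,p} : M p → M q` and `φ_{p,q} : M q → M p`
are mutually inverse bijections. -/
theorem stmt6 {P : Type*} {M : P → Type*} (S : CoherentSystem P M)
    {p q : P} (h : S.G p q) :
    (∀ v : M p, S.φ (S.symm h) (S.φ h v) = v) ∧
    (∀ w : M q, S.φ h (S.φ (S.symm h) w) = w) := by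
  obtain ⟨r, hr⟩ := S.rich {p, q} ((Set.finite_singleton q).insert p)
  have hpr : S.G p r := hr p (by simp)
  have hqr : S.G q r := hr q (by simp)
  constructor
  · intro v
    apply (S.bij hpr).1
    rw [S.cocycle (S.symm h) hpr hqr, S.cocycle h hqr hpr]
  · intro w
    apply (S.bij hqr).1
    rw [S.cocycle h hqr hpr, S.cocycle (S.symm h) hpr hqr]
end

section
/- Let (P, G, M, φ) be a coherent system of identifications. Let p, q, r ∈ P, and let s, t, u ∈ P satisfy: G p s and G s q; G q t and G t r; G p u and G u r. Then φ_{r,t} ∘ φ_{t,q} ∘ φ_{q,s} ∘ φ_{s,p} = φ_{r,u} ∘ φ_{u,p} as maps M p → M r. -/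
/-- In a coherent system of identifications, the extended basepoint-change
maps `ψ_{q,p} := φ_{q,s} ∘ φ_{s,p}` satisfy the cocycle condition: if `G p s`, `G s q`,
`G q t`, `G t r`, `G p u`, `G u r`, then
`φ_{r,t} ∘ φ_{t,q} ∘ φ_{q,s} ∘ φ_{s,p} = φ_{r,u} ∘ φ_{u,p}` as maps `M p → M r`. -/
theorem stmt8 {P : Type*} {M : P → Type*} (S : CoherentSystem P M)
    {p q r s t u : P}
    (hps : S.G p s) (hsq : S.G s q)
    (hqt : S.G q t) (htr : S.G t r)
    (hpu : S.G p u) (hur : S.G u r) :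
    ∀ v : M p, S.φ htr (S.φ hqt (S.φ hsq (S.φ hps v))) = S.φ hur (S.φ hpu v) := by
  obtain ⟨w, hw⟩ := S.rich {p, q, r, s, t, u} (Set.toFinite _)
  have hpw : S.G p w := hw p (by simp)
  have hqw : S.G q w := hw q (by simp)
  have hrw : S.G r w := hw r (by simp)
  have hsw : S.G s w := hw s (by simp)
  have htw : S.G t w := hw t (by simp)
  have huw : S.G u w := hw u (by simp)
  intro v
  calc S.φ htr (S.φ hqt (S.φ hsq (S.φ hps v)))
      = S.φ htr (S.φ hqt (S.φ (S.symm hqw) (S.φ hsw (S.φ hps v)))) := by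
        rw [S.cocycle hsw (S.symm hqw) hsq]
    _ = S.φ htr (S.φ hqt (S.φ (S.symm hqw) (S.φ hpw v))) := by
        rw [S.cocycle hps hsw hpw]
    _ = S.φ htr (S.φ (S.symm htw) (S.φ hpw v)) := by
        rw [S.cocycle (S.symm hqw) hqt (S.symm htw)]
    _ = S.φ (S.symm hrw) (S.φ hpw v) := by
        rw [S.cocycle (S.symm htw) htr (S.symm hrw)]
    _ = S.φ (S.symm hrw) (S.φ huw (S.φ hpu v)) := by
        rw [S.cocycle hpu huw hpw]
    _ = S.φ hur (S.φ hpu v) := S.cocycle huw (S.symm hrw) hur _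
end

section
/- Let (P, G, M, φ) be a coherent system of identifications. Then there exists a unique family of bijections ψ_{q,p} : M p → M q, one for each ordered pair (p, q) ∈ P × P, such that: (i) ψ_{q,p} = φ_{q,p} whenever G p q; and (ii) ψ_{r,q} ∘ ψ_{q,p} = ψ_{r,p} for all p, q, r ∈ P. Moreover, this family satisfies ψ_{p,p} = id on M p for every p ∈ P. -/
namespace Stmt9Aux

variable {P : Type*} {M : P → Type*} (S : CoherentSystem P M)

noncomputable def pick (p q : P) : P :=
  (S.rich {p, q} ((Set.finite_singleton q).insert p)).choose

lemma pick_l (p q : P) : S.G p (pick S p q) :=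
  (S.rich {p, q} ((Set.finite_singleton q).insert p)).choose_spec p (by simp)

lemma pick_r (p q : P) : S.G q (pick S p q) :=
  (S.rich {p, q} ((Set.finite_singleton q).insert p)).choose_spec q (by simp)

noncomputable def psi (p q : P) (v : M p) : M q :=
  (Equiv.ofBijective _ (S.bij (pick_r S p q))).symm (S.φ (pick_l S p q) v)

lemma key {p q r : P} (hpr : S.G p r) (hqr : S.G q r) (v : M p) :
    S.φ hqr (psi S p q v) = S.φ hpr v := by
  have h0 : S.φ (pick_r S p q) (psi S p q v) = S.φ (pick_l S p q) v :=
    (Equiv.ofBijective _ (S.bij (pick_r S p q))).apply_symm_apply _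
  set r0 := pick S p q with hr0
  obtain ⟨s, hs⟩ := S.rich {p, q, r, r0}
    (((((Set.finite_singleton r0).insert r).insert q).insert p))
  have hps : S.G p s := hs p (by simp)
  have hqs : S.G q s := hs q (by simp)
  have hrs : S.G r s := hs r (by simp)
  have hr0s : S.G r0 s := hs r0 (by simp)
  apply (S.bij hrs).injective
  calc S.φ hrs (S.φ hqr (psi S p q v)) = S.φ hqs (psi S p q v) :=
        S.cocycle hqr hrs hqs _
    _ = S.φ hr0s (S.φ (pick_r S p q) (psi S p q v)) :=
        (S.cocycle (pick_r S p q) hr0s hqs _).symm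
    _ = S.φ hr0s (S.φ (pick_l S p q) v) := by rw [h0]
    _ = S.φ hps v := S.cocycle (pick_l S p q) hr0s hps v
    _ = S.φ hrs (S.φ hpr v) := (S.cocycle hpr hrs hps v).symm

lemma psi_comp (p q r : P) (v : M p) : psi S q r (psi S p q v) = psi S p r v := by
  obtain ⟨s, hs⟩ := S.rich {p, q, r} ((((Set.finite_singleton r).insert q).insert p))
  have hps : S.G p s := hs p (by simp)
  have hqs : S.G q s := hs q (by simp)
  have hrs : S.G r s := hs r (by simp)
  apply (S.bij hrs).injective
  rw [key S hqs hrs, key S hps hqs, key S hps hrs]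

lemma psi_eq_phi (p q : P) (h : S.G p q) : psi S p q = S.φ h := by
  funext v
  obtain ⟨s, hs⟩ := S.rich {p, q} ((Set.finite_singleton q).insert p)
  have hps : S.G p s := hs p (by simp)
  have hqs : S.G q s := hs q (by simp)
  apply (S.bij hqs).injective
  rw [key S hps hqs, S.cocycle h hqs hps]

lemma psi_id (p : P) : psi S p p = id := by
  funext v
  obtain ⟨s, hs⟩ := S.rich {p} (Set.finite_singleton p)
  have hps : S.G p s := hs p (by simp)
  apply (S.bij hps).injective
  rw [key S hps hps]
  rfl

lemma psi_bij (p q : P) : Function.Bijective (psi S p q) := by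
  refine Function.bijective_iff_has_inverse.mpr ⟨psi S q p, fun v => ?_, fun v => ?_⟩ <;>
    rw [psi_comp, psi_id] <;> rfl

end Stmt9Aux


/-- In a coherent system of identifications there is a unique family of
bijections `ψ p q : M p → M q` (denoted `ψ_{q,p}`), one for each ordered pair, such that
(i) `ψ p q = φ_{q,p}` whenever `G p q`, and (ii) `ψ q r ∘ ψ p q = ψ p r` for all
`p, q, r`.  Moreover this family satisfies `ψ p p = id` for every `p`. -/
theorem stmt9 {P : Type*} {M : P → Type*} (S : CoherentSystem P M) :
    ∃ ψ : ∀ p q : P, M p → M q,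
      (∀ p q : P, Function.Bijective (ψ p q)) ∧
      (∀ (p q : P) (h : S.G p q), ψ p q = S.φ h) ∧
      (∀ p q r : P, ∀ v : M p, ψ q r (ψ p q v) = ψ p r v) ∧
      (∀ p : P, ψ p p = id) ∧
      (∀ ψ' : ∀ p q : P, M p → M q,
        (∀ p q : P, Function.Bijective (ψ' p q)) →
        (∀ (p q : P) (h : S.G p q), ψ' p q = S.φ h) →
        (∀ p q r : P, ∀ v : M p, ψ' q r (ψ' p q v) = ψ' p r v) →
        ψ' = ψ) := by
  refine ⟨Stmt9Aux.psi S, Stmt9Aux.psi_bij S, Stmt9Aux.psi_eq_phi S,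
    Stmt9Aux.psi_comp S, Stmt9Aux.psi_id S, ?_⟩
  intro ψ' _ hphi hcomp
  funext p q v
  obtain ⟨s, hs⟩ := S.rich {p, q} ((Set.finite_singleton q).insert p)
  have hps : S.G p s := hs p (by simp)
  have hqs : S.G q s := hs q (by simp)
  calc ψ' p q v = ψ' s q (ψ' p s v) := (hcomp p s q v).symm
    _ = S.φ (S.symm hqs) (S.φ hps v) := by rw [hphi p s hps, hphi s q (S.symm hqs)]
    _ = Stmt9Aux.psi S s q (Stmt9Aux.psi S p s v) := by
        rw [Stmt9Aux.psi_eq_phi S p s hps, Stmt9Aux.psi_eq_phi S s q (S.symm hqs)]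
    _ = Stmt9Aux.psi S p q v := Stmt9Aux.psi_comp S p s q v
end
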